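/- arXiv:2512.02291 — 4 statements merged into one kernel-verified Lean document; each statement's English description precedes it below -/
import Mathlib

section
/- If η > ν > 0 and σ > 1, then the absorbing interval J = [ν, η) is forward invariant under h: for every z ∈ J, h(z; η, ν, σ) ∈ J. The same holds for J = (η, ν] when 0 < η < ν. -/
/-!
On the branch `I_k` the rescaled point `w = σ^k z` lies in `[1, σ)`, and `h_k` is affine in `w`,
sending `w = 1` to `ν` and `w = σ` to `η`. Hence `h(z)` is the point of the segment from `ν` to `η`
at parameter `(w - 1) / (σ - 1) ∈ [0, 1)`, which never reaches `η` but may equal `ν`.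
-/

/-- The branch index: the unique `k` with `z ∈ [σ^(-k), σ^(-(k-1)))`. -/
noncomputable def Kidx (σ z : ℝ) : ℤ := ⌈-Real.log z / Real.log σ⌉

/-- The linear branch `h_k`. -/
noncomputable def hbranch (σ η ν : ℝ) (k : ℤ) (z : ℝ) : ℝ :=
  (η - ν) / (σ - 1) * σ ^ k * z + (-η + σ * ν) / (σ - 1)

/-- The map `h`, defined as the branch `h_k` for the unique `k` with `z ∈ I_k`. -/
noncomputable def hmap (σ η ν z : ℝ) : ℝ := hbranch σ η ν (Kidx σ z) z

open Set AffineMap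

section LineMap

variable {k E : Type*} [Ring k] [LinearOrder k] [IsStrictOrderedRing k]
  [AddCommGroup E] [PartialOrder E] [IsOrderedAddMonoid E] [Module k E] [IsStrictOrderedModule k E]
  {a b : E} {t : k}

theorem lineMap_mem_Ico (hab : a < b) (ht : t ∈ Ico 0 1) : lineMap a b t ∈ Ico a b :=
  ⟨(left_le_lineMap_iff_nonneg hab).2 ht.1, (lineMap_lt_right_iff_lt_one hab).2 ht.2⟩

theorem lineMap_mem_Ioc (hab : a < b) (ht : t ∈ Ico 0 1) : lineMap b a t ∈ Ioc a b := by
  rw [← lineMap_apply_one_sub]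
  exact ⟨(left_lt_lineMap_iff_pos hab).2 (sub_pos.2 ht.2),
    (lineMap_le_right_iff_le_one hab).2 (sub_le_self _ ht.1)⟩

end LineMap

theorem zpow_Kidx_mul_mem_Ico {σ z : ℝ} (hσ : 1 < σ) (hz : 0 < z) :
    σ ^ Kidx σ z * z ∈ Ico 1 σ := by
  have hlogσ : 0 < Real.log σ := Real.log_pos hσ
  have hpow : 0 < σ ^ Kidx σ z := zpow_pos (zero_lt_one.trans hσ) _
  have hlog : Real.log (σ ^ Kidx σ z * z) = Kidx σ z * Real.log σ + Real.log z := by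
    rw [Real.log_mul hpow.ne' hz.ne', Real.log_zpow]
  have hle : -Real.log z ≤ Kidx σ z * Real.log σ :=
    (div_le_iff₀ hlogσ).1 (Int.le_ceil _)
  have hceil : (Kidx σ z : ℝ) < -Real.log z / Real.log σ + 1 := Int.ceil_lt_add_one _
  have hlt : (Kidx σ z - 1) * Real.log σ < -Real.log z :=
    (lt_div_iff₀ hlogσ).1 (by linarith)
  constructor
  · rw [← Real.log_nonneg_iff (mul_pos hpow hz), hlog]
    linarith
  · rw [← Real.log_lt_log_iff (mul_pos hpow hz) (zero_lt_one.trans hσ), hlog]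
    linarith

theorem sub_one_div_sub_one_mem_Ico {w σ : ℝ} (hw : w ∈ Ico 1 σ) :
    (w - 1) / (σ - 1) ∈ Ico 0 1 := by
  have hσ : 0 < σ - 1 := by linarith [hw.1, hw.2]
  exact ⟨div_nonneg (sub_nonneg.2 hw.1) hσ.le, (div_lt_one hσ).2 (by linarith [hw.2])⟩

theorem hbranch_eq_lineMap {σ : ℝ} (hσ : σ ≠ 1) (η ν : ℝ) (k : ℤ) (z : ℝ) :
    hbranch σ η ν k z = lineMap ν η ((σ ^ k * z - 1) / (σ - 1)) := by
  have : σ - 1 ≠ 0 := sub_ne_zero.2 hσ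
  rw [hbranch, lineMap_apply_ring']
  field_simp
  ring

theorem exists_hmap_eq_lineMap {σ z : ℝ} (hσ : 1 < σ) (hz : 0 < z) (η ν : ℝ) :
    ∃ t ∈ Ico (0 : ℝ) 1, hmap σ η ν z = lineMap ν η t :=
  ⟨_, sub_one_div_sub_one_mem_Ico (zpow_Kidx_mul_mem_Ico hσ hz), hbranch_eq_lineMap hσ.ne' ..⟩

theorem absorbing_interval_invariant (σ η ν : ℝ) (hσ : 1 < σ) :
    (η > ν → ν > 0 → ∀ z ∈ Set.Ico ν η, hmap σ η ν z ∈ Set.Ico ν η) ∧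
      (0 < η → η < ν → ∀ z ∈ Set.Ioc η ν, hmap σ η ν z ∈ Set.Ioc η ν) := by
  constructor
  · intro hνη hν z hz
    obtain ⟨t, ht, hmap_eq⟩ := exists_hmap_eq_lineMap hσ (hν.trans_le hz.1) η ν
    exact hmap_eq ▸ lineMap_mem_Ico hνη ht
  · intro hη hην z hz
    obtain ⟨t, ht, hmap_eq⟩ := exists_hmap_eq_lineMap hσ (hη.trans hz.1) η ν
    exact hmap_eq ▸ lineMap_mem_Ioc hην ht
end

section
/- Let η, ν > 0 and σ > 1, and let N(η, ν, σ) be the number of integers k such that I_k ∩ J ≠ ∅, where J is the half-open interval with endpoints η and ν. Then N(η, ν, σ) = ⌈−ln(η)/ln(σ)⌉ − ⌈−ln(ν)/ln(σ)⌉ + 1 if η ≤ ν, and N(η, ν, σ) = ⌈−ln(ν)/ln(σ)⌉ − ⌊−ln(η)/ln(σ)⌋ if η > ν. -/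
/-! With `a x = -log x / log σ`, a point `x > 0` lies in `I_k` exactly when `k - 1 < a x ≤ k`,
i.e. `k = ⌈a x⌉`. As `a` is decreasing, `a '' J` is an interval with endpoints `a ν` and `a η`,
open at `a η`, and the `k` with `I_k ∩ J ≠ ∅` are the ceilings of its points: the integers from
`⌈a ν⌉` to `⌈a η⌉` when `η ≤ ν`, and from `⌊a η⌋ + 1` to `⌈a ν⌉` otherwise. -/

/-- The interval `I_k = [σ^(-k), σ^(-(k-1)))`. -/
def Ik (σ : ℝ) (k : ℤ) : Set ℝ := Set.Ico (σ ^ (-k)) (σ ^ (-(k - 1)))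

/-- The absorbing interval `J`, with endpoints `η` and `ν`. -/
noncomputable def Jset (η ν : ℝ) : Set ℝ :=
  if η < ν then Set.Ioc η ν else if η = ν then {η} else Set.Ico ν η

open Set

theorem Set.Ico_inter_Ioc_nonempty_iff {α : Type*} [LinearOrder α] [DenselyOrdered α]
    {a b c d : α} (hab : a < b) (hcd : c < d) :
    (Ico a b ∩ Ioc c d).Nonempty ↔ a ≤ d ∧ c < b := by
  constructor
  · rintro ⟨x, ⟨hax, hxb⟩, hcx, hxd⟩
    exact ⟨hax.trans hxd, hcx.trans hxb⟩
  · rintro ⟨had, hcb⟩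
    rcases lt_or_ge d b with hdb | hbd
    · exact ⟨d, ⟨had, hdb⟩, hcd, le_rfl⟩
    · obtain ⟨x, hx, hxb⟩ := exists_between (max_lt hab hcb)
      rw [max_lt_iff] at hx
      exact ⟨x, ⟨hx.1.le, hxb⟩, hx.2, hxb.le.trans hbd⟩

theorem Int.ncard_Icc_of_le {a b : ℤ} (h : a ≤ b + 1) : ((Icc a b).ncard : ℤ) = b + 1 - a := by
  rw [← Finset.coe_Icc, ncard_coe_finset, Int.card_Icc_of_le _ _ h]

theorem Ico_inter_Jset_nonempty_iff_of_le {a b η ν : ℝ} (hab : a < b) (h : η ≤ ν) :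
    (Ico a b ∩ Jset η ν).Nonempty ↔ a ≤ ν ∧ η < b := by
  rcases h.lt_or_eq with h | rfl
  · rw [Jset, if_pos h]
    exact Ico_inter_Ioc_nonempty_iff hab h
  · rw [Jset, if_neg (lt_irrefl η), if_pos rfl, inter_singleton_nonempty]
    exact Iff.rfl

theorem Ico_inter_Jset_nonempty_iff_of_lt {a b η ν : ℝ} (hab : a < b) (h : ν < η) :
    (Ico a b ∩ Jset η ν).Nonempty ↔ a < η ∧ ν < b := by
  rw [Jset, if_neg h.not_gt, if_neg h.ne', Ico_inter_Ico, nonempty_Ico, max_lt_iff, lt_min_iff,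
    lt_min_iff]
  exact ⟨fun h' => ⟨h'.1.2, h'.2.1⟩, fun h' => ⟨⟨hab, h'.1⟩, h'.2, h⟩⟩

section LogIndex

variable {σ x : ℝ}

theorem zpow_neg_le_iff (hσ : 1 < σ) (hx : 0 < x) (k : ℤ) :
    σ ^ (-k) ≤ x ↔ -Real.log x / Real.log σ ≤ k := by
  rw [← Real.log_le_log_iff (zpow_pos (zero_lt_one.trans hσ) _) hx, Real.log_zpow,
    div_le_iff₀ (Real.log_pos hσ)]
  push_cast
  constructor <;> intro h <;> linarith

theorem zpow_neg_lt_iff (hσ : 1 < σ) (hx : 0 < x) (k : ℤ) :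
    σ ^ (-k) < x ↔ -Real.log x / Real.log σ < k := by
  rw [← Real.log_lt_log_iff (zpow_pos (zero_lt_one.trans hσ) _) hx, Real.log_zpow,
    div_lt_iff₀ (Real.log_pos hσ)]
  push_cast
  constructor <;> intro h <;> linarith

theorem zpow_neg_le_iff_ceil_le (hσ : 1 < σ) (hx : 0 < x) (k : ℤ) :
    σ ^ (-k) ≤ x ↔ ⌈-Real.log x / Real.log σ⌉ ≤ k := by
  rw [zpow_neg_le_iff hσ hx, Int.ceil_le]

theorem lt_zpow_neg_sub_one_iff_le_ceil (hσ : 1 < σ) (hx : 0 < x) (k : ℤ) :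
    x < σ ^ (-(k - 1)) ↔ k ≤ ⌈-Real.log x / Real.log σ⌉ := by
  rw [← not_le, zpow_neg_le_iff_ceil_le hσ hx]
  omega

theorem zpow_neg_lt_iff_floor_lt (hσ : 1 < σ) (hx : 0 < x) (k : ℤ) :
    σ ^ (-k) < x ↔ ⌊-Real.log x / Real.log σ⌋ < k := by
  rw [zpow_neg_lt_iff hσ hx, Int.floor_lt]

theorem neg_log_div_log_le_of_le (hσ : 1 < σ) (hx : 0 < x) {y : ℝ} (hxy : x ≤ y) :
    -Real.log y / Real.log σ ≤ -Real.log x / Real.log σ := by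
  have := Real.log_pos hσ
  gcongr

end LogIndex

theorem number_of_branches (σ η ν : ℝ) (hσ : 1 < σ) (hη : 0 < η) (hν : 0 < ν) :
    ({k : ℤ | (Ik σ k ∩ Jset η ν).Nonempty}.ncard : ℤ) =
      if η ≤ ν then
        ⌈-Real.log η / Real.log σ⌉ - ⌈-Real.log ν / Real.log σ⌉ + 1
      else
        ⌈-Real.log ν / Real.log σ⌉ - ⌊-Real.log η / Real.log σ⌋ := by
  have hIk (k : ℤ) : σ ^ (-k) < σ ^ (-(k - 1)) := zpow_lt_zpow_right₀ hσ (by omega)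
  split_ifs with h
  · have hset : {k : ℤ | (Ik σ k ∩ Jset η ν).Nonempty} =
        Icc ⌈-Real.log ν / Real.log σ⌉ ⌈-Real.log η / Real.log σ⌉ := by
      ext k
      rw [mem_ofPred_eq, Ik, Ico_inter_Jset_nonempty_iff_of_le (hIk k) h,
        zpow_neg_le_iff_ceil_le hσ hν, lt_zpow_neg_sub_one_iff_le_ceil hσ hη, mem_Icc]
    have := Int.ceil_le_ceil (neg_log_div_log_le_of_le hσ hη h)
    rw [hset, Int.ncard_Icc_of_le (by omega)]
    ring
  · push Not at h
    have hset : {k : ℤ | (Ik σ k ∩ Jset η ν).Nonempty} =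
        Icc (⌊-Real.log η / Real.log σ⌋ + 1) ⌈-Real.log ν / Real.log σ⌉ := by
      ext k
      rw [mem_ofPred_eq, Ik, Ico_inter_Jset_nonempty_iff_of_lt (hIk k) h,
        zpow_neg_lt_iff_floor_lt hσ hη, lt_zpow_neg_sub_one_iff_le_ceil hσ hν, mem_Icc]
      omega
    have := (Int.floor_le_ceil _).trans (Int.ceil_le_ceil (neg_log_div_log_le_of_le hσ hν h.le))
    rw [hset, Int.ncard_Icc_of_le (by omega)]
    ring
end

section
/- Let σ > 1, k ∈ ℤ, η, ν ∈ ℝ with η ≠ ν, and suppose |s_k| < 1 where s_k = ((η − ν)/(σ − 1))·σ^k. Then the fixed point z_k* = (−η + σν)/(σ − 1 − (η − ν)σ^k) lies in the open interval (σ^(−k), σ^(−(k−1))) if and only if ν > σ^(−k) and η < σ^(−k+1). -/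
/-!
Write `a = σ^(-k)` and `D = σ - 1 - (η - ν) σ^k`; the hypothesis `|s_k| < 1` gives `D > 0`.
Since `a σ^k = 1`, clearing the denominator turns `a < z_k*` into `(σ - 1) a < (σ - 1) ν`
and `z_k* < σ a` into `(σ - 1) η < (σ - 1) σ a`, so each end of the interval is governed by
exactly one of the two conditions.
-/

section FixedPoint

variable {K : Type*} [Field K] [LinearOrder K] [IsStrictOrderedRing K] {σ η ν c : K}

lemma sub_sub_mul_pos_of_div_mul_lt_one (hσ : 1 < σ) (hs : (η - ν) / (σ - 1) * c < 1) :
    0 < σ - 1 - (η - ν) * c := by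
  have hσ1 : 0 < σ - 1 := sub_pos.mpr hσ
  rw [div_mul_eq_mul_div, div_lt_one hσ1] at hs
  linarith

lemma inv_lt_fixedPoint_iff (hσ : 1 < σ) (hc : c ≠ 0) (hD : 0 < σ - 1 - (η - ν) * c) :
    c⁻¹ < (-η + σ * ν) / (σ - 1 - (η - ν) * c) ↔ c⁻¹ < ν := by
  have hgap : -η + σ * ν - c⁻¹ * (σ - 1 - (η - ν) * c) = (σ - 1) * (ν - c⁻¹) := by
    field_simp
    ring
  rw [lt_div_iff₀ hD, ← sub_pos, hgap, mul_pos_iff_of_pos_left (sub_pos.mpr hσ), sub_pos]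

lemma fixedPoint_lt_mul_inv_iff (hσ : 1 < σ) (hc : c ≠ 0) (hD : 0 < σ - 1 - (η - ν) * c) :
    (-η + σ * ν) / (σ - 1 - (η - ν) * c) < σ * c⁻¹ ↔ η < σ * c⁻¹ := by
  have hgap : σ * c⁻¹ * (σ - 1 - (η - ν) * c) - (-η + σ * ν) = (σ - 1) * (σ * c⁻¹ - η) := by
    field_simp
    ring
  rw [div_lt_iff₀ hD, ← sub_pos, hgap, mul_pos_iff_of_pos_left (sub_pos.mpr hσ), sub_pos]

end FixedPoint

theorem fixed_point_in_interval_general (σ η ν : ℝ) (k : ℤ) (hσ : 1 < σ)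
    (hs : |(η - ν) / (σ - 1) * σ ^ k| < 1) :
    (-η + σ * ν) / (σ - 1 - (η - ν) * σ ^ k) ∈
        Set.Ioo (σ ^ (-k)) (σ ^ (-(k - 1))) ↔
      (ν > σ ^ (-k) ∧ η < σ ^ (-k + 1)) := by
  have hσ0 : σ ≠ 0 := by positivity
  have hc : σ ^ k ≠ 0 := zpow_ne_zero k hσ0
  have hD := sub_sub_mul_pos_of_div_mul_lt_one hσ (abs_lt.mp hs).2
  have hupper : σ ^ (-(k - 1)) = σ * (σ ^ k)⁻¹ := by
    rw [neg_sub, zpow_sub₀ hσ0, zpow_one, div_eq_mul_inv]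
  have hupper' : σ ^ (-k + 1) = σ * (σ ^ k)⁻¹ := by
    rw [zpow_add₀ hσ0, zpow_neg, zpow_one, mul_comm]
  rw [Set.mem_Ioo, hupper, hupper', zpow_neg, gt_iff_lt,
    inv_lt_fixedPoint_iff hσ hc hD, fixedPoint_lt_mul_inv_iff hσ hc hD]

theorem fixed_point_in_interval (σ η ν : ℝ) (k : ℤ) (hσ : 1 < σ) (hην : η ≠ ν)
    (hs : |(η - ν) / (σ - 1) * σ ^ k| < 1) :
    (-η + σ * ν) / (σ - 1 - (η - ν) * σ ^ k) ∈
        Set.Ioo (σ ^ (-k)) (σ ^ (-(k - 1))) ↔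
      (ν > σ ^ (-k) ∧ η < σ ^ (-k + 1)) :=
  fixed_point_in_interval_general σ η ν k hσ hs
end

section
/- Let σ > 1 and, for each k ∈ ℤ, let P_k be the open triangle {(η, ν) ∈ ℝ² : η < σ^(−k+1), σ^(−k) < ν < η + σ^(−k+1) − σ^(−k)}. Then for distinct integers k₁, k₂, the intersection P_{k₁} ∩ P_{k₂} is nonempty if and only if |k₁ − k₂| = 1. -/
/-- The open triangle `P_k` in the `(η, ν)`-plane. -/
def Ptri (σ : ℝ) (k : ℤ) : Set (ℝ × ℝ) :=
  {p | p.1 < σ ^ (-k + 1) ∧ σ ^ (-k) < p.2 ∧ p.2 < p.1 + σ ^ (-k + 1) - σ ^ (-k)}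

/-! Writing `t = σ ^ (-k)`, the triangle `P_k` is `{η < σ t, t < ν < η + (σ - 1) t}`, whose
`ν`-range is `(t, (2σ - 1) t)`. Since `2σ - 1 ≤ σ²`, the `ν`-ranges of `P_k` and `P_{k+2}` are
already disjoint. On the other hand `(σ^(-k), σ^(-k))` lies on the bottom edge of `P_k` and on
the right edge of `P_{k+1}`, so points just up and to the left of it lie in both. -/

def triangle (σ t : ℝ) : Set (ℝ × ℝ) :=
  {p | p.1 < σ * t ∧ t < p.2 ∧ p.2 < p.1 + (σ - 1) * t}

lemma Ptri_eq_triangle {σ : ℝ} (hσ : σ ≠ 0) (k : ℤ) : Ptri σ k = triangle σ (σ ^ (-k)) := by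
  have hshift : σ ^ (-k + 1) = σ * σ ^ (-k) := by rw [zpow_add_one₀ hσ, mul_comm]
  ext p
  simp only [Ptri, triangle, Set.mem_ofPred_eq, hshift]
  ring_nf

lemma snd_lt_of_mem_triangle {σ t : ℝ} {p : ℝ × ℝ} (hp : p ∈ triangle σ t) :
    p.2 < (2 * σ - 1) * t := by
  obtain ⟨h₁, -, h₃⟩ := hp
  linarith

lemma triangle_inter_triangle_nonempty {σ t : ℝ} (hσ : 1 < σ) (ht : 0 < t) :
    (triangle σ (σ * t) ∩ triangle σ t).Nonempty := by
  have hgap : 0 < (σ - 1) * t := mul_pos (sub_pos.2 hσ) ht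
  have hgap_le : (σ - 1) * t ≤ (σ - 1) * (σ * t) := by nlinarith
  refine ⟨(σ * t - (σ - 1) * t / 4, σ * t + (σ - 1) * t / 4), ⟨?_, ?_, ?_⟩, ⟨?_, ?_, ?_⟩⟩ <;>
    dsimp only <;> linarith

lemma triangle_inter_triangle_eq_empty {σ s t : ℝ} (ht : 0 ≤ t)
    (hst : σ ^ 2 * t ≤ s) : triangle σ s ∩ triangle σ t = ∅ := by
  refine Set.eq_empty_of_forall_notMem fun p ⟨hs, hpt⟩ => ?_
  have hσ_sq : (2 * σ - 1) * t ≤ σ ^ 2 * t := by nlinarith [sq_nonneg (σ - 1)]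
  linarith [hs.2.1, snd_lt_of_mem_triangle hpt]

theorem triangle_intersections (σ : ℝ) (hσ : 1 < σ) (k₁ k₂ : ℤ) (hne : k₁ ≠ k₂) :
    (Ptri σ k₁ ∩ Ptri σ k₂).Nonempty ↔ |k₁ - k₂| = 1 := by
  wlog hlt : k₁ < k₂ generalizing k₁ k₂
  · rw [Set.inter_comm, abs_sub_comm]
    exact this k₂ k₁ hne.symm (lt_of_le_of_ne (not_lt.1 hlt) hne.symm)
  have hσ₀ : 0 < σ := one_pos.trans hσ
  have hsplit : σ ^ (-k₁) = σ ^ (k₂ - k₁) * σ ^ (-k₂) := by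
    rw [← zpow_add₀ hσ₀.ne']
    ring_nf
  rw [Ptri_eq_triangle hσ₀.ne', Ptri_eq_triangle hσ₀.ne', hsplit,
    abs_sub_comm, abs_of_pos (sub_pos.2 hlt)]
  rcases (show k₂ - k₁ = 1 ∨ 2 ≤ k₂ - k₁ by omega) with hadj | hfar
  · simpa [hadj] using triangle_inter_triangle_nonempty hσ (zpow_pos hσ₀ (-k₂))
  · have hpow : σ ^ 2 ≤ σ ^ (k₂ - k₁) := by
      exact_mod_cast zpow_le_zpow_right₀ hσ.le hfar
    rw [triangle_inter_triangle_eq_empty (zpow_pos hσ₀ _).le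
      (mul_le_mul_of_nonneg_right hpow (zpow_pos hσ₀ _).le)]
    simp only [Set.not_nonempty_empty, false_iff]
    omega
end
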